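/- If the boundary ∂ẑ of a relative cycle ẑ of the pair K̂(b,d] (with [ẑ] ∈ H(K̂(b,d])) contains a vertical cell σ×b with min σ = b (nonzero coefficient), then [ẑ] is not in the image of the map H(K̂(b−1,d]) → H(K̂(b,d]) induced by inclusion of pairs. -/
import Mathlib


open Finsupp
open scoped Classical

/-- A finite Δ-complex over a field `F`: each cell has a dimension, a boundary chain,
and an integer support interval `T(σ) = [tmin σ, tmax σ] ⊆ [0, n]`; whenever `σ` appears
in `∂τ` one has `tmin σ < tmin τ < tmax τ < tmax σ`. -/
structure DeltaComplex (F : Type) [Field F] (n : ℤ) where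
  Cell : Type
  deq : DecidableEq Cell
  fin : Fintype Cell
  dim : Cell → ℕ
  tmin : Cell → ℤ
  tmax : Cell → ℤ
  bdry : Cell → (Cell →₀ F)
  tmin_nonneg : ∀ σ, 0 ≤ tmin σ
  tmin_lt_tmax : ∀ σ, tmin σ < tmax σ
  tmax_le : ∀ σ, tmax σ ≤ n
  bdry_dim : ∀ τ σ, bdry τ σ ≠ 0 → dim σ + 1 = dim τ
  nest : ∀ τ σ, bdry τ σ ≠ 0 → tmin σ < tmin τ ∧ tmax τ < tmax σ
  bdry_bdry : ∀ τ, ((bdry τ).sum fun σ a => a • bdry σ) = 0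

attribute [instance] DeltaComplex.deq DeltaComplex.fin

variable {F : Type} [Field F] {n : ℤ}

/-- The boundary of a chain of `K`. -/
noncomputable def bd (K : DeltaComplex F n) (c : K.Cell →₀ F) : K.Cell →₀ F :=
  c.sum fun τ a => a • K.bdry τ

/-- A chain is supported on a set of cells. -/
def SuppOn {α β : Type} [Zero β] (c : α →₀ β) (S : α → Prop) : Prop :=
  ∀ x, c x ≠ 0 → S x

/-- Cells of the prism `K̂`: vertical cells `σ×{i}` and horizontal cells `σ×[i,i+1]`. -/
inductive PCell (C : Type) where
  | vert : C → ℤ → PCell C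
  | horiz : C → ℤ → PCell C
deriving DecidableEq

/-- Membership of a prism cell in the prism `K̂`. -/
def inPrism (K : DeltaComplex F n) : PCell K.Cell → Prop
  | .vert σ i => K.tmin σ ≤ i ∧ i ≤ K.tmax σ
  | .horiz σ i => K.tmin σ ≤ i ∧ i + 1 ≤ K.tmax σ

/-- Membership of a prism cell in the interlevel subcomplex `K̂_i^j` (cells `σ×T` with
`T ⊆ [i,j]`). -/
def inSub (K : DeltaComplex F n) (i j : ℤ) : PCell K.Cell → Prop
  | .vert σ t => (K.tmin σ ≤ t ∧ t ≤ K.tmax σ) ∧ i ≤ t ∧ t ≤ j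
  | .horiz σ t => (K.tmin σ ≤ t ∧ t + 1 ≤ K.tmax σ) ∧ i ≤ t ∧ t + 1 ≤ j

/-- The boundary of a single prism cell: `∂(τ×i) = (∂τ)×i` and
`∂(σ×[i,i+1]) = σ×(i+1) − σ×i − (∂σ)×[i,i+1]`. -/
noncomputable def pcellBd (K : DeltaComplex F n) : PCell K.Cell → (PCell K.Cell →₀ F)
  | .vert τ i => (K.bdry τ).sum fun σ a => Finsupp.single (PCell.vert σ i) a
  | .horiz σ i =>
      Finsupp.single (PCell.vert σ (i + 1)) 1 - Finsupp.single (PCell.vert σ i) 1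
        - (K.bdry σ).sum fun ρ a => Finsupp.single (PCell.horiz ρ i) a

/-- The boundary of a prism chain. -/
noncomputable def pbd (K : DeltaComplex F n) (c : PCell K.Cell →₀ F) : PCell K.Cell →₀ F :=
  c.sum fun x a => a • pcellBd K x

/-- `z` is a relative cycle of the pair of subcomplexes `(A, B)` of the prism. -/
def RelCycle (K : DeltaComplex F n) (A B : PCell K.Cell → Prop)
    (z : PCell K.Cell →₀ F) : Prop :=
  SuppOn z A ∧ SuppOn (pbd K z) B

/-- The homology class `[z] ∈ H(A,B)` lies in the image of the map
`H(A',B') → H(A,B)` induced by the inclusion of pairs `(A',B') ⊆ (A,B)`: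
there is a relative cycle `α` of `(A',B')` homologous to `z` within `(A,B)`. -/
def InImg (K : DeltaComplex F n) (A' B' A B : PCell K.Cell → Prop)
    (z : PCell K.Cell →₀ F) : Prop :=
  ∃ α β γ : PCell K.Cell →₀ F,
    RelCycle K A' B' α ∧ SuppOn β A ∧ SuppOn γ B ∧ z = α + pbd K β + γ

/-- The vertical prism chain `w × t`. -/
noncomputable def vchain (K : DeltaComplex F n) (w : K.Cell →₀ F) (t : ℤ) :
    PCell K.Cell →₀ F :=
  w.sum fun σ a => Finsupp.single (PCell.vert σ t) a

/-- A valid choice of times for Lift-Cycle: for every simplex `τ` of `z` with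
`T(τ) ∩ [b,d] ≠ ∅`, the chosen time satisfies `t τ ∈ T(τ) ∩ [b,d]`. -/
def ValidTimes (K : DeltaComplex F n) (z : K.Cell →₀ F) (b d : ℤ) (t : K.Cell → ℤ) : Prop :=
  ∀ τ, z τ ≠ 0 → K.tmin τ ≤ d → b ≤ K.tmax τ →
    K.tmin τ ≤ t τ ∧ t τ ≤ K.tmax τ ∧ b ≤ t τ ∧ t τ ≤ d

/-- The chain `ẑ` produced by `Lift-Cycle(z, (s,f), w₀)` with the choice of times `t`
(here `b = min s f`, `d = max s f`): the sum of the vertical cells `⟨τ,z⟩·(τ×t_τ)` over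
simplices `τ` of `z` with `T(τ) ∩ [b,d] ≠ ∅`, plus horizontal cells `σ×[k,k+1]`
(oriented from `s` to `f`) whose coefficient is the running sum
`⟨σ,w₀⟩ + Σ ⟨τ,z⟩·⟨σ,∂τ⟩` over the cofaces `τ` whose time `t_τ` has already been passed
when traversing from `s` to `f`. -/
noncomputable def liftCycle (K : DeltaComplex F n) (z : K.Cell →₀ F) (s f : ℤ)
    (w0 : K.Cell →₀ F) (t : K.Cell → ℤ) : PCell K.Cell →₀ F :=
  (∑ τ ∈ z.support.filter (fun τ => K.tmin τ ≤ max s f ∧ min s f ≤ K.tmax τ),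
      Finsupp.single (PCell.vert τ (t τ)) (z τ))
  + ∑ σ : K.Cell, ∑ k ∈ Finset.Icc (min s f) (max s f - 1),
      Finsupp.single (PCell.horiz σ k)
        ((if s ≤ f then (1 : F) else -1) *
          (w0 σ +
            ∑ τ ∈ z.support.filter (fun τ =>
                (K.tmin τ ≤ max s f ∧ min s f ≤ K.tmax τ) ∧
                  (if s ≤ f then t τ ≤ k else k + 1 ≤ t τ)),
              z τ * (K.bdry τ) σ))

/-- Cells of the cone `K̄ = ω ∗ K`: base simplices, the cone vertex `ω`,
and cone simplices `σ̄ = ω ∗ σ`. -/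
inductive CCell (C : Type) where
  | base : C → CCell C
  | omega : CCell C
  | cone : C → CCell C
deriving DecidableEq

/-- Boundary of a single cell of the cone `K̄`:
`∂σ` for base simplices, `0` for `ω`, and `∂(ω∗σ) = σ − ω∗∂σ` (minus `ω` when `σ` is a
vertex) for cone simplices. -/
noncomputable def ccellBd (K : DeltaComplex F n) : CCell K.Cell → (CCell K.Cell →₀ F)
  | .base σ => (K.bdry σ).sum fun ρ a => Finsupp.single (CCell.base ρ) a
  | .omega => 0
  | .cone σ =>
      Finsupp.single (CCell.base σ) 1
        - (K.bdry σ).sum (fun ρ a => Finsupp.single (CCell.cone ρ) a)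
        - (if K.dim σ = 0 then Finsupp.single CCell.omega 1 else 0)

/-- The boundary of a chain of the cone `K̄`. -/
noncomputable def cbd (K : DeltaComplex F n) (c : CCell K.Cell →₀ F) : CCell K.Cell →₀ F :=
  c.sum fun x a => a • ccellBd K x

/-- The restriction `c ∩ K` of a cone chain to the base simplices, as a chain in `K`. -/
noncomputable def basePart (K : DeltaComplex F n) (c : CCell K.Cell →₀ F) : K.Cell →₀ F :=
  c.sum fun x a =>
    match x with
    | .base σ => Finsupp.single σ a
    | .omega => 0
    | .cone _ => 0

/-- The restriction `c ∩ (K̄ − K)` of a cone chain to the cells not in the base. -/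
noncomputable def conePart (K : DeltaComplex F n) (c : CCell K.Cell →₀ F) :
    CCell K.Cell →₀ F :=
  c.sum fun x a =>
    match x with
    | .base _ => 0
    | .omega => Finsupp.single CCell.omega a
    | .cone ρ => Finsupp.single (CCell.cone ρ) a

/-- The order of the cells of `K̄` in the cone filtration: base simplices by increasing
`min σ`, then `ω`, then cone simplices by decreasing `max σ`, ties broken consistently
so that every prefix is a subcomplex. -/
structure ConeOrder (K : DeltaComplex F n) where
  pos : CCell K.Cell → ℕ
  inj : Function.Injective pos
  base_lt_base : ∀ σ τ : K.Cell, K.tmin σ < K.tmin τ → pos (.base σ) < pos (.base τ)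
  base_lt_omega : ∀ σ : K.Cell, pos (.base σ) < pos .omega
  omega_lt_cone : ∀ σ : K.Cell, pos .omega < pos (.cone σ)
  cone_lt_cone : ∀ σ τ : K.Cell, K.tmax τ < K.tmax σ → pos (.cone σ) < pos (.cone τ)
  faces_first : ∀ x y, (ccellBd K x) y ≠ 0 → pos y < pos x

/-- `σ` is the pivot (lowest nonzero entry) of the column (chain) `c`. -/
def IsLow (K : DeltaComplex F n) (O : ConeOrder K) (c : CCell K.Cell →₀ F)
    (σ : CCell K.Cell) : Prop :=
  c σ ≠ 0 ∧ ∀ ρ, c ρ ≠ 0 → O.pos ρ ≤ O.pos σ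

/-- `R = DV` is a decomposition of the boundary matrix `D` of the cone filtration:
`V` is invertible upper-triangular and `R` is reduced (pivots of nonzero columns lie
in pairwise distinct rows). -/
structure IsReduction (K : DeltaComplex F n) (O : ConeOrder K)
    (R V : CCell K.Cell → (CCell K.Cell →₀ F)) : Prop where
  rdv : ∀ τ, R τ = cbd K (V τ)
  upper : ∀ τ ρ, (V τ) ρ ≠ 0 → O.pos ρ ≤ O.pos τ
  diag : ∀ τ, (V τ) τ ≠ 0
  reduced : ∀ τ τ' σ, τ ≠ τ' → IsLow K O (R τ) σ → ¬ IsLow K O (R τ') σ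

/-- One run of the lazy (standard left-to-right) reduction of the column of `τ`:
starting from a column `c` (with coefficient vector `v`), while the column is nonzero
and its pivot collides with the pivot of an earlier (already reduced) column, subtract
the appropriate scalar multiple of that column. -/
inductive LazyReduces (K : DeltaComplex F n) (O : ConeOrder K)
    (R V : CCell K.Cell → (CCell K.Cell →₀ F)) (τ : CCell K.Cell) :
    (CCell K.Cell →₀ F) → (CCell K.Cell →₀ F) →
      (CCell K.Cell →₀ F) → (CCell K.Cell →₀ F) → Prop
  | done (c v : CCell K.Cell →₀ F)
      (h : ∀ σ, IsLow K O c σ → ∀ τ', O.pos τ' < O.pos τ → ¬ IsLow K O (R τ') σ) :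
      LazyReduces K O R V τ c v c v
  | step (c v c' v' : CCell K.Cell →₀ F) (τ' σ : CCell K.Cell)
      (hlt : O.pos τ' < O.pos τ) (hc : IsLow K O c σ) (hr : IsLow K O (R τ') σ)
      (next : LazyReduces K O R V τ (c - (c σ / ((R τ') σ)) • R τ')
        (v - (c σ / ((R τ') σ)) • V τ') c' v') :
      LazyReduces K O R V τ c v c' v'

/-- `R = DV` is obtained by the lazy reduction: every column `R τ` (with coefficient
column `V τ`) is the result of the lazy reduction of the boundary column of `τ`,
columns being processed from left to right. -/
def IsLazyReduction (K : DeltaComplex F n) (O : ConeOrder K)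
    (R V : CCell K.Cell → (CCell K.Cell →₀ F)) : Prop :=
  ∀ τ, LazyReduces K O R V τ (ccellBd K τ) (Finsupp.single τ 1) (R τ) (V τ)

section AuxProof

variable (K : DeltaComplex F n)

lemma vert_inj (i : ℤ) : Function.Injective (fun σ : K.Cell => PCell.vert σ i) := by
  intro a b h; cases h; rfl

lemma horiz_inj (i : ℤ) : Function.Injective (fun σ : K.Cell => PCell.horiz σ i) := by
  intro a b h; cases h; rfl

lemma pcellBd_vert (τ : K.Cell) (i : ℤ) :
    pcellBd K (.vert τ i) = Finsupp.mapDomain (fun σ => PCell.vert σ i) (K.bdry τ) := rfl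

lemma pcellBd_horiz (σ : K.Cell) (i : ℤ) :
    pcellBd K (.horiz σ i) =
      Finsupp.single (PCell.vert σ (i + 1)) 1 - Finsupp.single (PCell.vert σ i) 1
        - Finsupp.mapDomain (fun ρ => PCell.horiz ρ i) (K.bdry σ) := rfl

lemma mapDomain_sum_smul (f : K.Cell → PCell K.Cell) (c : K.Cell →₀ F)
    (g : K.Cell → (K.Cell →₀ F)) :
    (c.sum fun x a => a • Finsupp.mapDomain f (g x))
      = Finsupp.mapDomain f (c.sum fun x a => a • g x) := by
  rw [Finsupp.sum, Finsupp.sum, ← Finsupp.lmapDomain_apply F F f, map_sum]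
  refine Finset.sum_congr rfl fun x _ => ?_
  rw [Finsupp.lmapDomain_apply, Finsupp.mapDomain_smul]

lemma pbd_add (c₁ c₂ : PCell K.Cell →₀ F) :
    pbd K (c₁ + c₂) = pbd K c₁ + pbd K c₂ :=
  Finsupp.sum_add_index' (fun x => zero_smul F _) (fun x a b => add_smul a b _)

lemma pbd_sub (c₁ c₂ : PCell K.Cell →₀ F) :
    pbd K (c₁ - c₂) = pbd K c₁ - pbd K c₂ :=
  Finsupp.sum_sub_index (fun x a b => sub_smul a b _)

lemma pbd_single (x : PCell K.Cell) (a : F) :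
    pbd K (Finsupp.single x a) = a • pcellBd K x :=
  Finsupp.sum_single_index (zero_smul F _)

lemma pbd_mapDomain_vert (i : ℤ) (c : K.Cell →₀ F) :
    pbd K (Finsupp.mapDomain (fun σ => PCell.vert σ i) c)
      = Finsupp.mapDomain (fun σ => PCell.vert σ i) (bd K c) := by
  rw [pbd, Finsupp.sum_mapDomain_index_inj (vert_inj K i)]
  simp only [pcellBd_vert]
  rw [mapDomain_sum_smul]
  rfl

lemma pbd_mapDomain_horiz (i : ℤ) (c : K.Cell →₀ F) :
    pbd K (Finsupp.mapDomain (fun σ => PCell.horiz σ i) c)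
      = Finsupp.mapDomain (fun σ => PCell.vert σ (i + 1)) c
        - Finsupp.mapDomain (fun σ => PCell.vert σ i) c
        - Finsupp.mapDomain (fun σ => PCell.horiz σ i) (bd K c) := by
  rw [pbd, Finsupp.sum_mapDomain_index_inj (horiz_inj K i)]
  have h3 : (c.sum fun ρ a => a • Finsupp.mapDomain (fun σ => PCell.horiz σ i) (K.bdry ρ))
      = Finsupp.mapDomain (fun σ => PCell.horiz σ i) (bd K c) := by
    rw [mapDomain_sum_smul]; rfl
  rw [← h3,
    show (Finsupp.mapDomain (fun σ => PCell.vert σ (i + 1)) c)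
      = c.sum fun ρ a => Finsupp.single (PCell.vert ρ (i + 1)) a from rfl,
    show (Finsupp.mapDomain (fun σ => PCell.vert σ i) c)
      = c.sum fun ρ a => Finsupp.single (PCell.vert ρ i) a from rfl,
    Finsupp.sum, Finsupp.sum, Finsupp.sum, Finsupp.sum,
    ← Finset.sum_sub_distrib, ← Finset.sum_sub_distrib]
  refine Finset.sum_congr rfl fun ρ _ => ?_
  rw [pcellBd_horiz]
  simp [smul_sub, Finsupp.smul_single, smul_eq_mul, mul_one]

lemma pbd_pcellBd (x : PCell K.Cell) : pbd K (pcellBd K x) = 0 := by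
  cases x with
  | vert τ i =>
      rw [pcellBd_vert, pbd_mapDomain_vert,
        show bd K (K.bdry τ) = 0 from K.bdry_bdry τ, Finsupp.mapDomain_zero]
  | horiz σ i =>
      rw [pcellBd_horiz, pbd_sub, pbd_sub, pbd_single, pbd_single, pbd_mapDomain_horiz,
        show bd K (K.bdry σ) = 0 from K.bdry_bdry σ, Finsupp.mapDomain_zero]
      simp only [one_smul, pcellBd_vert]
      abel

noncomputable def pbdL : (PCell K.Cell →₀ F) →ₗ[F] (PCell K.Cell →₀ F) :=
  Finsupp.lsum F fun x => LinearMap.toSpanSingleton F _ (pcellBd K x)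

lemma pbd_eq_pbdL (c : PCell K.Cell →₀ F) : pbd K c = pbdL K c := rfl

lemma pbd_pbd (c : PCell K.Cell →₀ F) : pbd K (pbd K c) = 0 := by
  rw [pbd_eq_pbdL K (pbd K c), pbd, map_finsuppSum, Finsupp.sum]
  apply Finset.sum_eq_zero
  intro x _
  rw [map_smul, ← pbd_eq_pbdL, pbd_pcellBd, smul_zero]

end AuxProof

/-- Lemma (open endpoint, `K̂(b,d]`): if the boundary of a relative cycle `ẑ` of the pair
`K̂(b,d] = (K̂_{-1}^d, K̂_{-1}^b)` contains a vertical cell `σ×b` with `min σ = b`, then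
`[ẑ]` is not in the image of `H(K̂(b-1,d]) → H(K̂(b,d])`. -/
theorem statement_7 {F : Type} [Field F] {n : ℤ} (K : DeltaComplex F n) (b d : ℤ)
    (z : PCell K.Cell →₀ F)
    (hz : RelCycle K (inSub K (-1) d) (inSub K (-1) b) z)
    (σ : K.Cell) (hσ : K.tmin σ = b) (hσz : pbd K z (PCell.vert σ b) ≠ 0) :
    ¬ InImg K (inSub K (-1) d) (inSub K (-1) (b - 1))
        (inSub K (-1) d) (inSub K (-1) b) z := by
  rintro ⟨α, β, γ, ⟨hαA, hαB⟩, hβ, hγ, heq⟩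
  -- ∂z = ∂α + ∂∂β + ∂γ = ∂α + ∂γ
  have hbd : pbd K z = pbd K α + pbd K γ := by
    rw [heq, pbd_add, pbd_add, pbd_pbd, add_zero]
  -- ∂α vanishes at σ×b since it is supported on K̂_{-1}^{b-1}
  have hα0 : pbd K α (PCell.vert σ b) = 0 := by
    by_contra h
    have := hαB _ h
    simp only [inSub] at this
    omega
  -- ∂γ vanishes at σ×b
  have hγ0 : pbd K γ (PCell.vert σ b) = 0 := by
    rw [pbd, Finsupp.sum_apply, Finsupp.sum]
    apply Finset.sum_eq_zero
    intro x hx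
    have hγx := hγ x (Finsupp.mem_support_iff.mp hx)
    cases x with
    | vert τ t =>
        simp only [inSub] at hγx
        rw [Finsupp.smul_apply, pcellBd_vert]
        by_cases ht : t = b
        · subst ht
          rw [Finsupp.mapDomain_apply (vert_inj K t)]
          have hτσ : K.bdry τ σ = 0 := by
            by_contra hne
            have := (K.nest τ σ hne).1
            omega
          rw [hτσ, smul_zero]
        · rw [Finsupp.mapDomain_notin_range, smul_zero]
          rintro ⟨ρ, hρ⟩
          simp only at hρ
          injection hρ with _ h2
          exact ht h2
    | horiz τ k =>
        simp only [inSub] at hγx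
        rw [Finsupp.smul_apply, pcellBd_horiz]
        have e1 : Finsupp.single (PCell.vert τ (k + 1)) (1 : F) (PCell.vert σ b) = 0 := by
          rw [Finsupp.single_apply, if_neg]
          intro h
          injection h with h1 h2
          subst h1
          omega
        have e2 : Finsupp.single (PCell.vert τ k) (1 : F) (PCell.vert σ b) = 0 := by
          rw [Finsupp.single_apply, if_neg]
          intro h
          injection h with h1 h2
          omega
        have e3 : Finsupp.mapDomain (fun ρ => PCell.horiz ρ k) (K.bdry τ)
            (PCell.vert σ b) = 0 := by
          rw [Finsupp.mapDomain_notin_range]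
          rintro ⟨ρ, hρ⟩
          simp at hρ
        rw [Finsupp.sub_apply, Finsupp.sub_apply, e1, e2, e3, sub_zero, sub_zero, smul_zero]
  have : pbd K z (PCell.vert σ b) = 0 := by
    rw [hbd, Finsupp.add_apply, hα0, hγ0, add_zero]
  exact hσz this
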